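/- arXiv:2504.14124 — 4 statements merged into one kernel-verified Lean document; each statement's English description precedes it below -/
import Mathlib

section
/- If G is a k-regular graph that admits an identifying code, then the full vertex set V(G) is a self-identifying code; in particular, a k-regular graph admits a self-identifying code if and only if it admits an identifying code. -/
def closedNbhd {V : Type*} (G : SimpleGraph V) (v : V) : Set V :=
  insert v (G.neighborSet v)

/-- `S` is an identifying code. -/
def IsIC {V : Type*} (G : SimpleGraph V) (S : Set V) : Prop :=
  (∀ x : V, (closedNbhd G x ∩ S).Nonempty) ∧
    ∀ u v : V, u ≠ v → closedNbhd G u ∩ S ≠ closedNbhd G v ∩ S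

/-- `S` is a self-identifying code. -/
def IsSIC {V : Type*} (G : SimpleGraph V) (S : Set V) : Prop :=
  (∀ x : V, (closedNbhd G x ∩ S).Nonempty) ∧
    ∀ u v : V, u ≠ v →
      ((closedNbhd G u ∩ S) \ (closedNbhd G v ∩ S)).Nonempty ∧
      ((closedNbhd G v ∩ S) \ (closedNbhd G u ∩ S)).Nonempty

lemma closedNbhd_ncard {V : Type*} [Fintype V] (G : SimpleGraph V) [DecidableRel G.Adj]
    (k : ℕ) (hreg : G.IsRegularOfDegree k) (v : V) : (closedNbhd G v).ncard = k + 1 := by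
  have h1 : v ∉ G.neighborSet v := by simp
  rw [closedNbhd, Set.ncard_insert_of_notMem h1 ((G.neighborSet v).toFinite)]
  rw [Set.ncard_eq_toFinset_card']
  have : (G.neighborSet v).toFinset.card = k := by
    rw [← SimpleGraph.neighborFinset_def]; exact hreg v
  omega

lemma closedNbhd_diff {V : Type*} [Fintype V] (G : SimpleGraph V) [DecidableRel G.Adj]
    (k : ℕ) (hreg : G.IsRegularOfDegree k) {S : Set V} (hS : IsIC G S) {u v : V}
    (huv : u ≠ v) : (closedNbhd G u \ closedNbhd G v).Nonempty := by
  rw [Set.nonempty_iff_ne_empty]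
  intro h
  have hsub : closedNbhd G u ⊆ closedNbhd G v := by
    rwa [Set.diff_eq_empty] at h
  have heq : closedNbhd G u = closedNbhd G v := by
    apply Set.eq_of_subset_of_ncard_le hsub _ ((closedNbhd G v).toFinite)
    rw [closedNbhd_ncard G k hreg, closedNbhd_ncard G k hreg]
  exact hS.2 u v huv (by rw [heq])

theorem stmt_6 {V : Type*} [Fintype V] (G : SimpleGraph V) [DecidableRel G.Adj] (k : ℕ)
    (hreg : G.IsRegularOfDegree k) :
    ((∃ S : Set V, IsIC G S) → IsSIC G (Set.univ : Set V)) ∧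
    ((∃ S : Set V, IsSIC G S) ↔ (∃ S : Set V, IsIC G S)) := by
  have main : (∃ S : Set V, IsIC G S) → IsSIC G (Set.univ : Set V) := by
    rintro ⟨S, hS⟩
    constructor
    · intro x
      exact ⟨x, by simp [closedNbhd]⟩
    · intro u v huv
      simp only [Set.inter_univ]
      exact ⟨closedNbhd_diff G k hreg hS huv, closedNbhd_diff G k hreg hS huv.symm⟩
  refine ⟨main, ⟨?_, fun h => ⟨Set.univ, main h⟩⟩⟩
  rintro ⟨S, hS⟩
  refine ⟨S, hS.1, fun u v huv heq => ?_⟩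
  obtain ⟨x, hx⟩ := (hS.2 u v huv).1
  rw [heq] at hx
  exact hx.2 hx.1
end

section
/- If S is a self-identifying code for G and u, v are adjacent vertices both of degree 2, then N[u] ∪ N[v] ⊆ S. -/
lemma other_neighbor {V : Type*} [Fintype V] (G : SimpleGraph V) [DecidableRel G.Adj]
    (u v : V) (huv : G.Adj u v) (hu : G.degree u = 2) :
    ∃ w, G.Adj u w ∧ w ≠ v ∧ ∀ x, G.Adj u x → x = v ∨ x = w := by
  classical
  obtain ⟨a, b, hab, hset⟩ := Finset.card_eq_two.mp hu
  have hmem : ∀ x, G.Adj u x ↔ x ∈ G.neighborFinset u := by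
    intro x; simp [SimpleGraph.mem_neighborFinset]
  have hv : v ∈ G.neighborFinset u := (hmem v).mp huv
  rw [hset] at hv
  rcases Finset.mem_insert.mp hv with h | h
  · refine ⟨b, ?_, ?_, ?_⟩
    · rw [hmem, hset]; simp
    · intro hbv; exact hab (h ▸ hbv.symm)
    · intro x hx
      have := (hmem x).mp hx
      rw [hset] at this
      rcases Finset.mem_insert.mp this with h' | h'
      · left; rw [h', h]
      · right; exact Finset.mem_singleton.mp h'
  · have hb : v = b := Finset.mem_singleton.mp h
    refine ⟨a, ?_, ?_, ?_⟩
    · rw [hmem, hset]; simp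
    · intro hav; exact hab (hav.trans hb)
    · intro x hx
      have := (hmem x).mp hx
      rw [hset] at this
      rcases Finset.mem_insert.mp this with h' | h'
      · right; exact h'
      · left; exact (Finset.mem_singleton.mp h').trans hb.symm

lemma mem_closedNbhd_iff {V : Type*} (G : SimpleGraph V) (x w : V) :
    w ∈ closedNbhd G x ↔ w = x ∨ G.Adj x w := by
  simp [closedNbhd, SimpleGraph.mem_neighborSet]

theorem stmt_7 {V : Type*} [Fintype V] (G : SimpleGraph V) [DecidableRel G.Adj]
    (S : Set V) (hS : IsSIC G S) (u v : V) (huv : G.Adj u v)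
    (hu : G.degree u = 2) (hv : G.degree v = 2) :
    closedNbhd G u ∪ closedNbhd G v ⊆ S := by
  obtain ⟨u', huu', hu'v, hu'only⟩ := other_neighbor G u v huv hu
  obtain ⟨v', hvv', hv'u, hv'only⟩ := other_neighbor G v u huv.symm hv
  -- generic: if x has degree-2 neighbors {y, z} (z the other), pair (x, z) forces ...
  -- Step: u ∈ S via pair (v, v')
  have key : ∀ x y z : V, G.Adj x y → G.Adj x z → y ≠ z →
      (∀ w, G.Adj x w → w = y ∨ w = z) → y ∈ S := by
    intro x y z hxy hxz hyz honly
    obtain ⟨s, ⟨hsx, hsS⟩, hsnot⟩ := (hS.2 x z (G.ne_of_adj hxz)).1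
    rcases (mem_closedNbhd_iff G x s).mp hsx with h | h
    · exact absurd ⟨(mem_closedNbhd_iff G z s).mpr (Or.inr (h ▸ hxz.symm)), hsS⟩ hsnot
    · rcases honly s h with h' | h'
      · exact h' ▸ hsS
      · exact absurd ⟨(mem_closedNbhd_iff G z s).mpr (Or.inl h'), hsS⟩ hsnot
  have huS : u ∈ S := key v u v' huv.symm hvv' hv'u.symm hv'only
  have hvS : v ∈ S := key u v u' huv huu' hu'v.symm hu'only
  -- u' ∈ S via pair (u, v)
  have hother : ∀ x y z : V, G.Adj x y → G.Adj x z → y ≠ z →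
      (∀ w, G.Adj x w → w = y ∨ w = z) → z ∈ S := by
    intro x y z hxy hxz hyz honly
    obtain ⟨s, ⟨hsx, hsS⟩, hsnot⟩ := (hS.2 x y (G.ne_of_adj hxy)).1
    rcases (mem_closedNbhd_iff G x s).mp hsx with h | h
    · exact absurd ⟨(mem_closedNbhd_iff G y s).mpr (Or.inr (h ▸ hxy.symm)), hsS⟩ hsnot
    · rcases honly s h with h' | h'
      · exact absurd ⟨(mem_closedNbhd_iff G y s).mpr (Or.inl h'), hsS⟩ hsnot
      · exact h' ▸ hsS
  have hu'S : u' ∈ S := hother u v u' huv huu' hu'v.symm hu'only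
  have hv'S : v' ∈ S := hother v u v' huv.symm hvv' hv'u.symm hv'only
  intro w hw
  rcases hw with hw | hw
  · rcases (mem_closedNbhd_iff G u w).mp hw with h | h
    · exact h ▸ huS
    · rcases hu'only w h with h' | h'
      · exact h' ▸ hvS
      · exact h' ▸ hu'S
  · rcases (mem_closedNbhd_iff G v w).mp hw with h | h
    · exact h ▸ hvS
    · rcases hv'only w h with h' | h'
      · exact h' ▸ huS
      · exact h' ▸ hv'S
end

section
/- Let G be a cubic graph on n ≥ 8 vertices admitting a self-identifying code, and suppose some vertex x is not adjacent to any triangle not containing x. Then there exists a vertex y within distance 2 of x such that V(G) − {y} is a self-identifying code of G; consequently SIC(G) ≤ n − 1. -/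
def AdjToTriangle {V : Type*} (G : SimpleGraph V) (v : V) : Prop :=
  ∃ a b c : V, G.Adj a b ∧ G.Adj b c ∧ G.Adj a c ∧
    v ≠ a ∧ v ≠ b ∧ v ≠ c ∧ (G.Adj v a ∨ G.Adj v b ∨ G.Adj v c)

section Aux

variable {V : Type*} [Fintype V] [DecidableEq V] (G : SimpleGraph V) [DecidableRel G.Adj]

/-- A vertex is good if it is not adjacent to a triangle avoiding it and
has no nonadjacent (open) twin. -/
def Good (y : V) : Prop :=
  ¬ AdjToTriangle G y ∧
    ∀ t, t ≠ y → ¬ G.Adj y t → ¬ (G.neighborFinset y ⊆ G.neighborFinset t)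

variable {G}

lemma mem_closedNbhd {v w : V} : w ∈ closedNbhd G v ↔ w = v ∨ G.Adj v w := by
  simp [closedNbhd, SimpleGraph.mem_neighborSet]

lemma tri_norm {y : V} (h : AdjToTriangle G y) :
    ∃ u s t : V, G.Adj y u ∧ G.Adj u s ∧ G.Adj u t ∧ G.Adj s t ∧
      y ≠ u ∧ y ≠ s ∧ y ≠ t := by
  obtain ⟨a, b, c, hab, hbc, hac, hya, hyb, hyc, hd⟩ := h
  rcases hd with h | h | h
  · exact ⟨a, b, c, h, hab, hac, hbc, hya, hyb, hyc⟩
  · exact ⟨b, a, c, h, hab.symm, hbc, hac, hyb, hya, hyc⟩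
  · exact ⟨c, a, b, h, hac.symm, hbc.symm, hab, hyc, hya, hyb⟩

variable (hcubic : G.IsRegularOfDegree 3)
include hcubic

lemma deg3 (v : V) : (G.neighborFinset v).card = 3 := by
  rw [SimpleGraph.card_neighborFinset_eq_degree]; exact hcubic v

lemma nbhd_eq3 {p a b c : V} (ha : G.Adj p a) (hb : G.Adj p b) (hc : G.Adj p c)
    (hab : a ≠ b) (hac : a ≠ c) (hbc : b ≠ c) : G.neighborFinset p = {a, b, c} := by
  have hsub : ({a, b, c} : Finset V) ⊆ G.neighborFinset p := by
    intro z hz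
    simp only [Finset.mem_insert, Finset.mem_singleton] at hz
    rcases hz with rfl | rfl | rfl <;> simpa [SimpleGraph.mem_neighborFinset]
  have hcard : ({a, b, c} : Finset V).card = 3 := by
    rw [Finset.card_insert_of_notMem (by simp [hab, hac]),
      Finset.card_insert_of_notMem (by simp [hbc]), Finset.card_singleton]
  exact (Finset.eq_of_subset_of_card_le hsub (by rw [deg3 hcubic, hcard])).symm

lemma nbhd_third {p q r : V} (hq : G.Adj p q) (hr : G.Adj p r) (hqr : q ≠ r) :
    ∃ t, G.Adj p t ∧ t ≠ q ∧ t ≠ r ∧ G.neighborFinset p = {q, r, t} := by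
  have hsub : ({q, r} : Finset V) ⊆ G.neighborFinset p := by
    intro z hz
    simp only [Finset.mem_insert, Finset.mem_singleton] at hz
    rcases hz with rfl | rfl <;> simpa [SimpleGraph.mem_neighborFinset]
  have h2 : ({q, r} : Finset V).card = 2 := Finset.card_pair hqr
  have hne : (G.neighborFinset p \ {q, r}).Nonempty := by
    rw [← Finset.card_pos, Finset.card_sdiff_of_subset hsub, h2, deg3 hcubic]
    norm_num
  obtain ⟨t, ht⟩ := hne
  simp only [Finset.mem_sdiff, Finset.mem_insert, Finset.mem_singleton, not_or] at ht
  obtain ⟨htm, htq, htr⟩ := ht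
  have hadj : G.Adj p t := by rwa [SimpleGraph.mem_neighborFinset] at htm
  exact ⟨t, hadj, htq, htr, nbhd_eq3 hcubic hq hr hadj hqr (Ne.symm htq) (Ne.symm htr)⟩

variable (htf : ∀ u v : V, u ≠ v → ∃ w, w ∈ closedNbhd G u ∧ w ∉ closedNbhd G v)
include htf

/-- No "diamond": if z-β, z-γ, β-γ, and β is in a triangle avoiding z, contradiction
with closed-twin-freeness. -/
lemma no_diamond {z β γ s t : V} (hzβ : G.Adj z β) (hzγ : G.Adj z γ) (hβγ : G.Adj β γ)
    (hs : G.Adj β s) (ht : G.Adj β t) (hst : G.Adj s t) (hsz : s ≠ z) (htz : t ≠ z) :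
    False := by
  obtain ⟨rb, hrb, hrbz, hrbγ, hNβ⟩ := nbhd_third hcubic hzβ.symm hβγ hzγ.ne
  have hmem : ∀ w, G.Adj β w → w = z ∨ w = γ ∨ w = rb := by
    intro w hw
    have : w ∈ G.neighborFinset β := by rwa [SimpleGraph.mem_neighborFinset]
    rw [hNβ] at this
    simpa using this
  have hγrb : G.Adj γ rb := by
    rcases hmem s hs with rfl | rfl | rfl
    · exact absurd rfl hsz
    · rcases hmem t ht with rfl | rfl | rfl
      · exact absurd rfl htz
      · exact absurd hst (G.irrefl)
      · exact hst
    · rcases hmem t ht with rfl | rfl | rfl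
      · exact absurd rfl htz
      · exact hst.symm
      · exact absurd hst (G.irrefl)
  obtain ⟨w, hw1, hw2⟩ := htf β γ hβγ.ne
  rw [mem_closedNbhd] at hw1 hw2
  push_neg at hw2
  rcases hw1 with rfl | hw1
  · exact hw2.2 hβγ.symm
  · rcases hmem w hw1 with rfl | rfl | rfl
    · exact hw2.2 hzγ.symm
    · exact absurd rfl hw2.1
    · exact hw2.2 hγrb

/-- The key lemma: in the twin case, either the chosen neighbor p or its third
neighbor tp is good. -/
lemma key_lemma {x v p q r tp tq tr : V}
    (hnadj : ¬ G.Adj x v) (hxv : x ≠ v)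
    (hNvx : G.neighborFinset v = G.neighborFinset x)
    (hind : ∀ s t, G.Adj x s → G.Adj x t → ¬ G.Adj s t)
    (hNx : G.neighborFinset x = {p, q, r})
    (hp : G.neighborFinset p = {x, v, tp}) (htpx : tp ≠ x) (htpv : tp ≠ v)
    (hq : G.neighborFinset q = {x, v, tq})
    (hr : G.neighborFinset r = {x, v, tr})
    (hptq : tp ≠ tq) (hptr : tp ≠ tr) :
    ∃ y, G.dist x y ≤ 2 ∧ Good G y := by
  have hmemx : ∀ w, G.Adj x w ↔ (w = p ∨ w = q ∨ w = r) := by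
    intro w
    rw [← SimpleGraph.mem_neighborFinset, hNx]; simp
  have hmemv : ∀ w, G.Adj v w ↔ (w = p ∨ w = q ∨ w = r) := by
    intro w
    rw [← SimpleGraph.mem_neighborFinset, hNvx, hNx]; simp
  have hmemp : ∀ w, G.Adj p w ↔ (w = x ∨ w = v ∨ w = tp) := by
    intro w
    rw [← SimpleGraph.mem_neighborFinset, hp]; simp
  have hxp : G.Adj x p := (hmemx p).2 (Or.inl rfl)
  have hxq : G.Adj x q := (hmemx q).2 (Or.inr (Or.inl rfl))
  have hxr : G.Adj x r := (hmemx r).2 (Or.inr (Or.inr rfl))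
  have hptp : G.Adj p tp := (hmemp tp).2 (Or.inr (Or.inr rfl))
  -- tp is not a neighbor of x (nor of v)
  have hxtp : ¬ G.Adj x tp := fun h => hind p tp hxp h hptp
  have hvtp : ¬ G.Adj v tp := by
    intro h
    rw [hmemv] at h
    exact hxtp ((hmemx tp).2 h)
  -- p has no nonadjacent twin
  have htwinp : ∀ t, t ≠ p → ¬ G.Adj p t → ¬ (G.neighborFinset p ⊆ G.neighborFinset t) := by
    intro t htp hnpt hsubp
    have htx : G.Adj t x := by
      have := hsubp (show x ∈ G.neighborFinset p by rw [hp]; simp)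
      rwa [SimpleGraph.mem_neighborFinset] at this
    have htmem : t = p ∨ t = q ∨ t = r := (hmemx t).1 htx.symm
    have htpmem : tp ∈ G.neighborFinset t :=
      hsubp (show tp ∈ G.neighborFinset p by rw [hp]; simp)
    rcases htmem with rfl | rfl | rfl
    · exact htp rfl
    · rw [hq] at htpmem; simp at htpmem
      rcases htpmem with h | h | h
      · exact htpx h
      · exact htpv h
      · exact hptq h
    · rw [hr] at htpmem; simp at htpmem
      rcases htpmem with h | h | h
      · exact htpx h
      · exact htpv h
      · exact hptr h
  have hdp : G.dist x p ≤ 2 := by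
    have h1 := SimpleGraph.dist_le (SimpleGraph.Walk.cons hxp SimpleGraph.Walk.nil)
    simp only [SimpleGraph.Walk.length_cons, SimpleGraph.Walk.length_nil] at h1
    omega
  by_cases htri : AdjToTriangle G p
  · -- p fails via a triangle; it must hang at tp
    obtain ⟨u, s, t, hpu, hus, hut, hst, hpu', hps, hpt⟩ := tri_norm htri
    have humem : u = x ∨ u = v ∨ u = tp := (hmemp u).1 hpu
    rcases humem with rfl | rfl | hu
    · exact absurd hst (hind s t hus hut)
    · have hxs : G.Adj x s := (hmemx s).2 ((hmemv s).1 hus)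
      have hxt : G.Adj x t := (hmemx t).2 ((hmemv t).1 hut)
      exact absurd hst (hind s t hxs hxt)
    · -- triangle at z := tp with β := s, γ := t
      subst hu
      set z := u with hzdef
      have hzs : G.Adj z s := hus
      have hzt : G.Adj z t := hut
      have hpz : G.Adj p z := hptp
      have hNz : G.neighborFinset z = {p, s, t} :=
        nbhd_eq3 hcubic hpz.symm hzs hzt hps hpt hst.ne
      have hmemz : ∀ w, G.Adj z w ↔ (w = p ∨ w = s ∨ w = t) := by
        intro w
        rw [← SimpleGraph.mem_neighborFinset, hNz]; simp
      -- s,t are not neighbors of x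
      have haux : ∀ w, G.Adj z w → w ≠ p → ¬ G.Adj x w := by
        intro w hzw hwp hxw
        rcases (hmemx w).1 hxw with rfl | hwq | hwr
        · exact hwp rfl
        · subst hwq
          have hz2 : z ∈ G.neighborFinset w := by
            rw [SimpleGraph.mem_neighborFinset]; exact hzw.symm
          rw [hq] at hz2; simp at hz2
          rcases hz2 with h | h | h
          · exact htpx h
          · exact htpv h
          · exact hptq h
        · subst hwr
          have hz2 : z ∈ G.neighborFinset w := by
            rw [SimpleGraph.mem_neighborFinset]; exact hzw.symm
          rw [hr] at hz2; simp at hz2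
          rcases hz2 with h | h | h
          · exact htpx h
          · exact htpv h
          · exact hptr h
      have hdz : G.dist x z ≤ 2 := by
        have h1 := SimpleGraph.dist_le
          (SimpleGraph.Walk.cons hxp (SimpleGraph.Walk.cons hpz SimpleGraph.Walk.nil))
        simp only [SimpleGraph.Walk.length_cons, SimpleGraph.Walk.length_nil] at h1
        omega
      refine ⟨z, hdz, ?_, ?_⟩
      · -- z is not adjacent to a triangle avoiding z
        intro htriz
        obtain ⟨u', s', t', hzu, hus', hut', hst', hzu', hzs', hzt'⟩ := tri_norm htriz
        rcases (hmemz u').1 hzu with rfl | rfl | rfl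
        · -- triangle at p: its two other vertices are among {x, v}
          have hs'm : s' = x ∨ s' = v ∨ s' = z := (hmemp s').1 hus'
          have ht'm : t' = x ∨ t' = v ∨ t' = z := (hmemp t').1 hut'
          rcases hs'm with rfl | rfl | rfl
          · rcases ht'm with rfl | rfl | rfl
            · exact G.irrefl hst'
            · exact hnadj hst'
            · exact hzt' rfl
          · rcases ht'm with rfl | rfl | rfl
            · exact hnadj hst'.symm
            · exact G.irrefl hst'
            · exact hzt' rfl
          · exact hzs' rfl
        · exact no_diamond hcubic htf hzu hzt hst hus' hut' hst'
            (Ne.symm hzs') (Ne.symm hzt')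
        · exact no_diamond hcubic htf hzu hzs hst.symm hus' hut' hst'
            (Ne.symm hzs') (Ne.symm hzt')
      · -- z has no nonadjacent twin
        intro t' ht'z hnzt' hsubz
        have ht'p : G.Adj t' p := by
          have := hsubz (show p ∈ G.neighborFinset z by rw [hNz]; simp)
          rwa [SimpleGraph.mem_neighborFinset] at this
        have ht'm : t' = x ∨ t' = v ∨ t' = z := (hmemp t').1 ht'p.symm
        have hsm : s ∈ G.neighborFinset t' :=
          hsubz (show s ∈ G.neighborFinset z by rw [hNz]; simp)
        rw [SimpleGraph.mem_neighborFinset] at hsm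
        rcases ht'm with rfl | rfl | rfl
        · exact haux s hzs (Ne.symm hps) hsm
        · exact haux s hzs (Ne.symm hps) ((hmemx s).2 ((hmemv s).1 hsm))
        · exact ht'z rfl
  · exact ⟨p, hdp, htri, htwinp⟩

/-- Good vertices give SICs by deleting them. -/
lemma onesided {y : V} (hy : Good G y) (u v : V) (huv : u ≠ v) :
    ((closedNbhd G u ∩ (Set.univ \ {y})) \ (closedNbhd G v ∩ (Set.univ \ {y}))).Nonempty := by
  by_contra hcon
  rw [Set.not_nonempty_iff_eq_empty, Set.diff_eq_empty] at hcon
  obtain ⟨w₀, hw1, hw2⟩ := htf u v huv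
  have hkey : ∀ w, w ∈ closedNbhd G u → w ∉ closedNbhd G v → w = y := by
    intro w h1 h2
    by_contra hwy
    exact h2 (hcon ⟨h1, ⟨trivial, by simpa using hwy⟩⟩).1
  have hy0 : w₀ = y := hkey w₀ hw1 hw2
  subst hy0
  rw [mem_closedNbhd] at hw1 hw2
  push_neg at hw2
  by_cases hadj : G.Adj u v
  · have hyune : w₀ ≠ u := by rintro rfl; exact hw2.2 hadj.symm
    have hyu : G.Adj u w₀ := hw1.resolve_left hyune
    have hvy : v ≠ w₀ := Ne.symm hw2.1
    obtain ⟨s, hus, hsv, hsy, _⟩ := nbhd_third hcubic hadj hyu hvy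
    have hsNv : s ∈ closedNbhd G v := by
      by_contra h
      exact hsy (hkey s (Or.inr (by simpa using hus)) h)
    rw [mem_closedNbhd] at hsNv
    have hvs : G.Adj v s := hsNv.resolve_left hsv
    exact hy.1 ⟨u, v, s, hadj, hvs, hus, hyune, hw2.1, Ne.symm hsy, Or.inl hyu.symm⟩
  · have hyu : w₀ = u := by
      have huNv : u ∉ closedNbhd G v := by
        rw [mem_closedNbhd]
        push_neg
        exact ⟨huv, fun h => hadj h.symm⟩
      exact (hkey u (Or.inl rfl) huNv).symm
    subst hyu
    have hsub : G.neighborFinset w₀ ⊆ G.neighborFinset v := by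
      intro s hs
      rw [SimpleGraph.mem_neighborFinset] at hs ⊢
      have hsNv : s ∈ closedNbhd G v := by
        by_contra h
        exact hs.ne' (hkey s (Or.inr (by simpa using hs)) h)
      rw [mem_closedNbhd] at hsNv
      rcases hsNv with rfl | h
      · exact absurd hs hadj
      · exact h
    exact hy.2 v (Ne.symm huv) hadj hsub

lemma sic_of_good {y : V} (hy : Good G y) : IsSIC G (Set.univ \ {y}) := by
  constructor
  · intro z
    have hne : (G.neighborFinset z).Nonempty := by
      rw [← Finset.card_pos, deg3 hcubic]; norm_num
    obtain ⟨w, hw⟩ := hne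
    rw [SimpleGraph.mem_neighborFinset] at hw
    by_cases hzy : z = y
    · exact ⟨w, (mem_closedNbhd).2 (Or.inr hw), trivial, by simp [← hzy, hw.ne']⟩
    · exact ⟨z, (mem_closedNbhd).2 (Or.inl rfl), trivial, by simpa using hzy⟩
  · intro u v huv
    exact ⟨onesided hcubic htf hy u v huv, onesided hcubic htf hy v u huv.symm⟩

lemma exists_good (hconn : G.Connected) (hn : 8 ≤ Fintype.card V) (x : V)
    (hx : ¬ AdjToTriangle G x) : ∃ y, G.dist x y ≤ 2 ∧ Good G y := by
  by_cases htw : ∀ t, t ≠ x → ¬ G.Adj x t → ¬ (G.neighborFinset x ⊆ G.neighborFinset t)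
  · exact ⟨x, by rw [SimpleGraph.dist_self]; omega, hx, htw⟩
  push_neg at htw
  obtain ⟨v, hvx, hnadj, hsub⟩ := htw
  have hxv : x ≠ v := Ne.symm hvx
  have hNvx : G.neighborFinset v = G.neighborFinset x :=
    (Finset.eq_of_subset_of_card_le hsub (by rw [deg3 hcubic, deg3 hcubic])).symm
  have hvadj : ∀ t, G.Adj x t → G.Adj v t := by
    intro t ht
    rw [← SimpleGraph.mem_neighborFinset, hNvx, SimpleGraph.mem_neighborFinset]
    exact ht
  have hind : ∀ s t, G.Adj x s → G.Adj x t → ¬ G.Adj s t := by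
    intro s t hxs hxt hst
    exact hx ⟨s, t, v, hst, (hvadj t hxt).symm, (hvadj s hxs).symm,
      hxs.ne, hxt.ne, hxv, Or.inl hxs⟩
  have h3 := deg3 hcubic x
  rw [Finset.card_eq_three] at h3
  obtain ⟨a, b, c, hab, hac, hbc, hNx⟩ := h3
  have hxa : G.Adj x a := by rw [← SimpleGraph.mem_neighborFinset, hNx]; simp
  have hxb : G.Adj x b := by rw [← SimpleGraph.mem_neighborFinset, hNx]; simp
  have hxc : G.Adj x c := by rw [← SimpleGraph.mem_neighborFinset, hNx]; simp
  obtain ⟨ta, hata, htax, htav, hNa⟩ := nbhd_third hcubic hxa.symm (hvadj a hxa).symm hxv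
  obtain ⟨tb, hbtb, htbx, htbv, hNb⟩ := nbhd_third hcubic hxb.symm (hvadj b hxb).symm hxv
  obtain ⟨tc, hctc, htcx, htcv, hNc⟩ := nbhd_third hcubic hxc.symm (hvadj c hxc).symm hxv
  have hK33 : ¬ (ta = tb ∧ tb = tc) := by
    rintro ⟨h1, h2⟩
    subst h1; subst h2
    have hNw : G.neighborFinset ta = {a, b, c} :=
      nbhd_eq3 hcubic hata.symm hbtb.symm hctc.symm hab hac hbc
    set C : Finset V := {x, v, a, b, c, ta} with hC
    have hstep : ∀ z w', z ∈ C → G.Adj z w' → w' ∈ C := by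
      intro z w' hz hzw
      have hmem : w' ∈ G.neighborFinset z := by
        rw [SimpleGraph.mem_neighborFinset]; exact hzw
      simp only [hC, Finset.mem_insert, Finset.mem_singleton] at hz ⊢
      rcases hz with rfl | rfl | rfl | rfl | rfl | rfl
      · rw [hNx] at hmem; simp at hmem; tauto
      · rw [hNvx, hNx] at hmem; simp at hmem; tauto
      · rw [hNa] at hmem; simp at hmem; tauto
      · rw [hNb] at hmem; simp at hmem; tauto
      · rw [hNc] at hmem; simp at hmem; tauto
      · rw [hNw] at hmem; simp at hmem; tauto
    have hall : ∀ (u₁ u₂ : V), G.Walk u₁ u₂ → u₁ ∈ C → u₂ ∈ C := by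
      intro u₁ u₂ p
      induction p with
      | nil => exact id
      | cons h p ih => exact fun h1 => ih (hstep _ _ h1 h)
    have hCuniv : ∀ z, z ∈ C := by
      intro z
      obtain ⟨p⟩ := hconn.preconnected x z
      exact hall x z p (by simp [hC])
    have hcard : Fintype.card V ≤ C.card := by
      rw [← Finset.card_univ]
      exact Finset.card_le_card fun z _ => hCuniv z
    have h6 : C.card ≤ 6 := by
      rw [hC]
      refine le_trans (Finset.card_insert_le _ _) ?_
      have h5 : ({v, a, b, c, ta} : Finset V).card ≤ 5 := by
        refine le_trans (Finset.card_insert_le _ _) ?_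
        have h4 : ({a, b, c, ta} : Finset V).card ≤ 4 := by
          refine le_trans (Finset.card_insert_le _ _) ?_
          have h3' : ({b, c, ta} : Finset V).card ≤ 3 := by
            refine le_trans (Finset.card_insert_le _ _) ?_
            have h2' : ({c, ta} : Finset V).card ≤ 2 := by
              refine le_trans (Finset.card_insert_le _ _) ?_
              simp
            omega
          omega
        omega
      omega
    omega
  by_cases h1 : ta ≠ tb ∧ ta ≠ tc
  · exact key_lemma hcubic htf hnadj hxv hNvx hind hNx hNa htax htav hNb hNc h1.1 h1.2
  by_cases h2 : tb ≠ ta ∧ tb ≠ tc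
  · have hNx' : G.neighborFinset x = {b, a, c} := by
      rw [hNx, Finset.insert_comm]
    exact key_lemma hcubic htf hnadj hxv hNvx hind hNx' hNb htbx htbv hNa hNc h2.1 h2.2
  by_cases h3 : tc ≠ ta ∧ tc ≠ tb
  · have hNx' : G.neighborFinset x = {c, a, b} := by
      rw [hNx, Finset.pair_comm b c, Finset.insert_comm a c]
    exact key_lemma hcubic htf hnadj hxv hNvx hind hNx' hNc htcx htcv hNa hNb h3.1 h3.2
  · exfalso
    apply hK33
    push_neg at h1 h2 h3
    by_cases hab' : ta = tb
    · refine ⟨hab', ?_⟩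
      by_cases h : tc = tb
      · exact h.symm
      · exact (h3 (fun hh => h (hh.trans hab'))).symm
    · exact absurd ((h1 hab').trans (h2 (Ne.symm hab')).symm) hab'

end Aux

theorem stmt_13 {V : Type*} [Fintype V] (G : SimpleGraph V) [DecidableRel G.Adj]
    (hconn : G.Connected) (hcubic : G.IsRegularOfDegree 3)
    (hn : 8 ≤ Fintype.card V)
    (hadmits : ∃ S : Set V, IsSIC G S)
    (x : V) (hx : ¬ AdjToTriangle G x) :
    (∃ y : V, G.dist x y ≤ 2 ∧ IsSIC G (Set.univ \ {y})) ∧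
    sInf {m : ℕ | ∃ S : Set V, IsSIC G S ∧ S.ncard = m} ≤ Fintype.card V - 1 := by
  classical
  obtain ⟨S, hS⟩ := hadmits
  have htf : ∀ u v : V, u ≠ v → ∃ w, w ∈ closedNbhd G u ∧ w ∉ closedNbhd G v := by
    intro u v huv
    obtain ⟨w, hw⟩ := (hS.2 u v huv).1
    exact ⟨w, hw.1.1, fun h => hw.2 ⟨h, hw.1.2⟩⟩
  obtain ⟨y, hdy, hgy⟩ := exists_good hcubic htf hconn hn x hx
  have hsic := sic_of_good hcubic htf hgy
  refine ⟨⟨y, hdy, hsic⟩, Nat.sInf_le ⟨Set.univ \ {y}, hsic, ?_⟩⟩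
  rw [Set.ncard_diff (by simp), Set.ncard_univ, Set.ncard_singleton,
    Nat.card_eq_fintype_card]
end

section
/- In the infinite king grid (vertex set ℤ×ℤ, with (i,j) adjacent to (k,ℓ) iff max(|i−k|,|j−ℓ|) = 1), every self-identifying code S is 3-dominating: for every vertex x, |N[x] ∩ S| ≥ 3. -/
/-- The infinite king grid on ℤ × ℤ. -/
def kingGrid : SimpleGraph (ℤ × ℤ) where
  Adj p q := max |p.1 - q.1| |p.2 - q.2| = 1
  symm := by
    constructor
    intro p q h
    simpa [abs_sub_comm] using h
  loopless := by
    constructor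
    intro p h
    simp at h

/-!
In a self-identifying code, `N[x] ∩ S ⊆ N[y]` forces `y = x`. In the king grid, separating
`x + (1, 0)` from `x + (2, 0)` needs a codeword in the middle column of `N[x]`, and likewise one
in its middle row. So if `N[x] ∩ S ⊆ {p, q}`, then `p` and `q` are adjacent or equal, and such
a pair has a common closed neighbour `y ≠ x`, whence `N[x] ∩ S ⊆ N[y]`: a contradiction.
-/

theorem Set.three_le_ncard_of_forall_not_subset_pair {α : Type*} {s : Set α} (hs : s.Finite)
    (hne : s.Nonempty) (h : ∀ p ∈ s, ∀ q ∈ s, ¬s ⊆ {p, q}) : 3 ≤ s.ncard := by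
  obtain ⟨a, ha⟩ := hne
  obtain ⟨b, hb, hab⟩ := Set.not_subset.1 (h a ha a ha)
  obtain ⟨c, hc, hc'⟩ := Set.not_subset.1 (h a ha b hb)
  simp only [Set.pair_eq_singleton, Set.mem_singleton_iff, Set.mem_insert_iff, not_or] at hab hc'
  exact (Set.two_lt_ncard hs).2 ⟨a, ha, b, hb, c, hc, Ne.symm hab, Ne.symm hc'.1, Ne.symm hc'.2⟩

theorem IsSIC.eq_of_inter_subset {V : Type*} {G : SimpleGraph V} {S : Set V} (hS : IsSIC G S)
    {x y : V} (h : closedNbhd G x ∩ S ⊆ closedNbhd G y) : x = y := by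
  by_contra hxy
  obtain ⟨a, ⟨hax, haS⟩, hay⟩ := (hS.2 x y hxy).1
  exact hay ⟨h ⟨hax, haS⟩, haS⟩

theorem closedNbhd_kingGrid (x : ℤ × ℤ) :
    closedNbhd kingGrid x = Set.Icc (x.1 - 1) (x.1 + 1) ×ˢ Set.Icc (x.2 - 1) (x.2 + 1) := by
  ext y
  simp only [closedNbhd, Set.mem_insert_iff, SimpleGraph.mem_neighborSet, kingGrid, Set.mem_prod,
    Set.mem_Icc, Prod.ext_iff, max_def, abs_eq_max_neg]
  split_ifs <;> omega

theorem mem_closedNbhd_kingGrid {x y : ℤ × ℤ} :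
    y ∈ closedNbhd kingGrid x ↔
      x.1 - 1 ≤ y.1 ∧ y.1 ≤ x.1 + 1 ∧ x.2 - 1 ≤ y.2 ∧ y.2 ≤ x.2 + 1 := by
  simp only [closedNbhd_kingGrid, Set.mem_prod, Set.mem_Icc, and_assoc]

theorem finite_closedNbhd_kingGrid (x : ℤ × ℤ) : (closedNbhd kingGrid x).Finite := by
  rw [closedNbhd_kingGrid]
  exact (Set.finite_Icc _ _).prod (Set.finite_Icc _ _)

theorem exists_ne_mem_closedNbhd_kingGrid {p q : ℤ × ℤ} (hpq : q ∈ closedNbhd kingGrid p)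
    (x : ℤ × ℤ) : ∃ y ≠ x, p ∈ closedNbhd kingGrid y ∧ q ∈ closedNbhd kingGrid y := by
  rw [mem_closedNbhd_kingGrid] at hpq
  simp only [mem_closedNbhd_kingGrid, ne_eq, Prod.ext_iff, Prod.exists]
  by_cases hx : x.1 = min p.1 q.1
  · exact ⟨min p.1 q.1 + 1, min p.2 q.2, by omega, by omega, by omega⟩
  · exact ⟨min p.1 q.1, min p.2 q.2, by omega, by omega, by omega⟩

theorem IsSIC.exists_mem_inter_fst_eq {S : Set (ℤ × ℤ)} (hS : IsSIC kingGrid S) (x : ℤ × ℤ) :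
    ∃ a ∈ closedNbhd kingGrid x ∩ S, a.1 = x.1 := by
  by_contra! h
  have hsub : closedNbhd kingGrid (x.1 + 1, x.2) ∩ S ⊆ closedNbhd kingGrid (x.1 + 2, x.2) := by
    rintro a ⟨ha, haS⟩
    simp only [mem_closedNbhd_kingGrid] at ha ⊢
    have : a.1 ≠ x.1 := fun hax => h a ⟨mem_closedNbhd_kingGrid.2 (by omega), haS⟩ hax
    omega
  simpa using hS.eq_of_inter_subset hsub

theorem IsSIC.exists_mem_inter_snd_eq {S : Set (ℤ × ℤ)} (hS : IsSIC kingGrid S) (x : ℤ × ℤ) :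
    ∃ a ∈ closedNbhd kingGrid x ∩ S, a.2 = x.2 := by
  by_contra! h
  have hsub : closedNbhd kingGrid (x.1, x.2 + 1) ∩ S ⊆ closedNbhd kingGrid (x.1, x.2 + 2) := by
    rintro a ⟨ha, haS⟩
    simp only [mem_closedNbhd_kingGrid] at ha ⊢
    have : a.2 ≠ x.2 := fun hax => h a ⟨mem_closedNbhd_kingGrid.2 (by omega), haS⟩ hax
    omega
  simpa using hS.eq_of_inter_subset hsub

theorem IsSIC.not_inter_subset_pair {S : Set (ℤ × ℤ)} (hS : IsSIC kingGrid S) {x p q : ℤ × ℤ}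
    (hp : p ∈ closedNbhd kingGrid x) (hq : q ∈ closedNbhd kingGrid x) :
    ¬closedNbhd kingGrid x ∩ S ⊆ {p, q} := by
  intro hsub
  obtain ⟨a, ha, ha1⟩ := hS.exists_mem_inter_fst_eq x
  obtain ⟨b, hb, hb2⟩ := hS.exists_mem_inter_snd_eq x
  have hpq : q ∈ closedNbhd kingGrid p := by
    rw [mem_closedNbhd_kingGrid] at hp hq ⊢
    rcases hsub ha with rfl | rfl <;> rcases hsub hb with rfl | rfl <;> omega
  obtain ⟨y, hyx, hpy, hqy⟩ := exists_ne_mem_closedNbhd_kingGrid hpq x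
  exact hyx (hS.eq_of_inter_subset (hsub.trans (Set.pair_subset hpy hqy))).symm

theorem stmt_18 (S : Set (ℤ × ℤ)) (hS : IsSIC kingGrid S) :
    ∀ x : ℤ × ℤ, 3 ≤ (closedNbhd kingGrid x ∩ S).ncard := fun x =>
  Set.three_le_ncard_of_forall_not_subset_pair ((finite_closedNbhd_kingGrid x).inter_of_left S)
    (hS.1 x) fun _ hp _ hq => hS.not_inter_subset_pair hp.1 hq.1
end
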